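/- Let X be an additive category with weak kernels in which every epimorphism is a weak cokernel. If an object F of the quotient category (mod X)/(eff X) satisfies Hom(F, Φ(X)) = 0 for all X ∈ X, then F ≅ 0. (Here Φ is the composite of the Yoneda embedding and the quotient functor.) -/

import Mathlib

open CategoryTheory CategoryTheory.Limits

set_option linter.unusedSectionVars false

universe v u

variable {C : Type u} [Category.{v} C] [Preadditive C] [HasFiniteBiproducts C]

/-- `f : A ⟶ B` is a weak kernel of `g : B ⟶ X` -/
def IsWeakKernel {A B X : C} (f : A ⟶ B) (g : B ⟶ X) : Prop :=
  f ≫ g = 0 ∧ ∀ ⦃T : C⦄ (l : T ⟶ B), l ≫ g = 0 → ∃ k : T ⟶ A, k ≫ f = l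

/-- `h : B ⟶ X` is a weak cokernel of `f : A ⟶ B` -/
def IsWeakCokernel {A B X : C} (h : B ⟶ X) (f : A ⟶ B) : Prop :=
  f ≫ h = 0 ∧ ∀ ⦃T : C⦄ (l : B ⟶ T), f ≫ l = 0 → ∃ k : X ⟶ T, h ≫ k = l

/-- `C` has weak kernels. -/
def HasWeakKernels : Prop :=
  ∀ ⦃a b : C⦄ (f : a ⟶ b), ∃ (c : C) (k : c ⟶ a), IsWeakKernel k f

/-- Every epimorphism of `C` is a weak cokernel. -/
def EpiIsWeakCokernel : Prop :=
  ∀ ⦃a b : C⦄ (f : a ⟶ b), Epi f → ∃ (c : C) (g : c ⟶ a), IsWeakCokernel f g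

variable (C) in
/-- A functor `F : Cᵒᵖ ⥤ Ab` is finitely presented if it is the cokernel of a morphism
between representable functors. -/
def IsFP (F : Cᵒᵖ ⥤ AddCommGrpCat.{v}) : Prop :=
  ∃ (X₁ X₀ : C) (f : X₁ ⟶ X₀) (p : preadditiveYoneda.obj X₀ ⟶ F)
    (w : preadditiveYoneda.map f ≫ p = 0),
    Nonempty (IsColimit (CokernelCofork.ofπ p w))

variable (C) in
/-- A functor `F : Cᵒᵖ ⥤ Ab` is effaceable if it admits a presentation induced by an
epimorphism of `C`. -/
def IsEff (F : Cᵒᵖ ⥤ AddCommGrpCat.{v}) : Prop :=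
  ∃ (X₁ X₀ : C) (f : X₁ ⟶ X₀), Epi f ∧
    ∃ (p : preadditiveYoneda.obj X₀ ⟶ F) (w : preadditiveYoneda.map f ≫ p = 0),
      Nonempty (IsColimit (CokernelCofork.ofπ p w))

lemma preadditiveYoneda_map_zero {X Y : C} :
    preadditiveYoneda.map (0 : X ⟶ Y) = 0 := by
  ext Z g
  simp

lemma isFP_preadditiveYoneda (X : C) : IsFP C (preadditiveYoneda.obj X) :=
  ⟨X, X, 0, 𝟙 _, by rw [preadditiveYoneda_map_zero]; simp,
    ⟨CokernelCofork.IsColimit.ofId _ preadditiveYoneda_map_zero⟩⟩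

variable (C) in
/-- The category `mod C` of finitely presented functors. -/
abbrev ModCat := ObjectProperty.FullSubcategory (IsFP C)

variable (C) in
/-- The class of morphisms of `mod C` whose kernel and cokernel (computed in the ambient
functor category) are effaceable. -/
def effW : MorphismProperty (ModCat C) := fun F G φ =>
  IsEff C (kernel (show F.obj ⟶ G.obj from φ.hom)) ∧
    IsEff C (cokernel (show F.obj ⟶ G.obj from φ.hom))

variable (C) in
/-- The Yoneda embedding `C ⥤ mod C`. -/
def yonedaMod : C ⥤ ModCat C :=
  ObjectProperty.lift _ preadditiveYoneda isFP_preadditiveYoneda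

/-!
The functor `Hom(-, Φ(X))` on `mod C` inverts the morphisms with effaceable kernel and cokernel:
morphisms to a representable vanish on effaceable functors, and they extend along a monomorphism
`m` with effaceable cokernel. For the latter, present `cokernel m` by an epimorphism `e` of `C`;
writing `Y` for the additive Yoneda embedding, the induced square from `Y e` to `m` is a pushout,
and since `e` is a weak cokernel the morphism extends over it. Hence `Hom(-, Φ(X))` factors
through the quotient, and the hypothesis forces every morphism `F ⟶ Φ(X)` to vanish. Then the map
`X₁ ⟶ X₀` presenting `F` is an epimorphism, i.e. `F` is effaceable, and `Q F ≅ Q 0` is zero.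
-/

open ZeroObject

namespace CategoryTheory.IsPushout

variable {A : Type*} [Category A] [Abelian A] {X₁ X₂ X₃ X₄ : A}
  {t : X₁ ⟶ X₂} {l : X₁ ⟶ X₃} {r : X₂ ⟶ X₄} {b : X₃ ⟶ X₄}

lemma of_mono_of_isIso_cokernel_map (sq : CommSq t l r b) [Mono b]
    [IsIso (cokernel.map _ _ _ _ sq.w)] : IsPushout t l r b := by
  let S := ShortComplex.mk (biprod.lift t (-l)) (biprod.desc r b) (by simp [sq.w])
  have : Epi S.g := by
    refine Preadditive.epi_of_cancel_zero _ fun {_} χ hχ => ?_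
    have hr : r ≫ χ = 0 := by simpa [S] using biprod.inl ≫= hχ
    have hb : b ≫ χ = 0 := by simpa [S] using biprod.inr ≫= hχ
    have : cokernel.desc b χ hb = 0 := by
      rw [← cancel_epi (cokernel.π t ≫ cokernel.map _ _ _ _ sq.w)]
      simp [hr]
    rw [← cokernel.π_desc b χ hb, this, comp_zero]
  have hS : S.Exact := by
    rw [ShortComplex.exact_iff_exact_up_to_refinements]
    intro T x hx
    have hx' : (x ≫ biprod.fst) ≫ r = -((x ≫ biprod.snd) ≫ b) := by
      refine eq_neg_of_add_eq_zero_left ?_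
      simpa [S, biprod.desc_eq, Preadditive.comp_add] using hx
    have hfst : (x ≫ biprod.fst) ≫ cokernel.π t = 0 := by
      rw [← cancel_mono (cokernel.map _ _ _ _ sq.w), Category.assoc, cokernel.π_desc,
        ← Category.assoc, hx']
      simp
    obtain ⟨T', π, _, y, hy⟩ := (ShortComplex.exact_of_g_is_cokernel
      (ShortComplex.mk _ _ (cokernel.condition t)) (cokernelIsCokernel t)).exact_up_to_refinements
      _ hfst
    refine ⟨T', π, inferInstance, y, ?_⟩
    dsimp at y hy
    have hsnd : π ≫ x ≫ biprod.snd = -(y ≫ l) := by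
      rw [← cancel_mono b]
      calc (π ≫ x ≫ biprod.snd) ≫ b = -(π ≫ (x ≫ biprod.fst) ≫ r) := by simp [hx']
        _ = (-(y ≫ l)) ≫ b := by simp [reassoc_of% hy, sq.w]
    apply biprod.hom_ext <;> simp [S, hy, hsnd]
  exact ⟨sq, ⟨sq.isColimitEquivIsColimitCokernelCofork.symm hS.gIsCokernel⟩⟩

end CategoryTheory.IsPushout

namespace CategoryTheory.MorphismProperty

variable {E : Type*} [Category E] (W : MorphismProperty E)

open Localization.Construction in
/-- `W.Localization` need not have zero morphisms, so this goes by induction on its morphisms. -/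
lemma isZero_Q_obj {Z : E} (hZ : IsZero Z) : IsZero (W.Q.obj Z) := by
  let toT (T : W.Localization) : W.Q.obj Z ⟶ T := W.Q.map (hZ.to_ ((objEquiv W).symm T))
  let fromT (T : W.Localization) : T ⟶ W.Q.obj Z := W.Q.map (hZ.from_ ((objEquiv W).symm T))
  let P : MorphismProperty W.Localization := fun T T' φ => toT T ≫ φ = toT T'
  let P' : MorphismProperty W.Localization := fun T T' φ => φ ≫ fromT T' = fromT T
  have : P.IsStableUnderComposition := ⟨fun f g (h₁ : _ = _) (h₂ : _ = _) => by
    simp only [P, ← Category.assoc, h₁, h₂]⟩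
  have : P'.IsStableUnderComposition := ⟨fun f g (h₁ : _ = _) (h₂ : _ = _) => by
    simp only [P', Category.assoc, h₁, h₂]⟩
  have hP : P = ⊤ := by
    refine morphismProperty_eq_top' _ (fun _ _ f => ?_) (fun _ _ e (he : _ = _) => ?_)
    · exact (W.Q.map_comp _ _).symm.trans (congrArg W.Q.map (hZ.eq_of_src _ _))
    · simp only [P, ← he, Category.assoc, e.hom_inv_id, Category.comp_id]
  have hP' : P' = ⊤ := by
    refine morphismProperty_eq_top' _ (fun _ _ f => ?_) (fun _ _ e (he : _ = _) => ?_)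
    · exact (W.Q.map_comp _ _).symm.trans (congrArg W.Q.map (hZ.eq_of_tgt _ _))
    · simp only [P', ← he, ← Category.assoc, e.inv_hom_id, Category.id_comp]
  have hid : toT (W.Q.obj Z) = 𝟙 _ :=
    (congrArg W.Q.map (hZ.eq_of_src _ _)).trans (W.Q.map_id Z)
  have hid' : fromT (W.Q.obj Z) = 𝟙 _ :=
    (congrArg W.Q.map (hZ.eq_of_src _ _)).trans (W.Q.map_id Z)
  refine ⟨fun T => ⟨⟨⟨toT T⟩, fun φ => ?_⟩⟩, fun T => ⟨⟨⟨fromT T⟩, fun φ => ?_⟩⟩⟩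
  · have : P φ := by rw [hP]; trivial
    simpa [P, hid] using this
  · have : P' φ := by rw [hP']; trivial
    simpa [P', hid'] using this

end CategoryTheory.MorphismProperty

open Opposite

section Representables

variable {D : Type*} [Category D] [Preadditive D]

lemma preadditiveYoneda_obj_hom_ext {Z : D} {G : Dᵒᵖ ⥤ AddCommGrpCat}
    {φ₁ φ₂ : preadditiveYoneda.obj Z ⟶ G}
    (h : φ₁.app (op Z) (𝟙 Z) = φ₂.app (op Z) (𝟙 Z)) : φ₁ = φ₂ := by
  ext T (f : T.unop ⟶ Z)
  have key (φ : preadditiveYoneda.obj Z ⟶ G) : φ.app T f = G.map f.op (φ.app (op Z) (𝟙 Z)) :=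
    (congrArg (φ.app T) (Category.comp_id f).symm).trans (φ.naturality_apply f.op _)
  exact (key φ₁).trans ((congrArg _ h).trans (key φ₂).symm)

lemma exists_preadditiveYoneda_map_comp_eq {X Z : D} {G : Dᵒᵖ ⥤ AddCommGrpCat}
    (π : preadditiveYoneda.obj X ⟶ G) [Epi π] (φ : preadditiveYoneda.obj Z ⟶ G) :
    ∃ h : Z ⟶ X, preadditiveYoneda.map h ≫ π = φ := by
  obtain ⟨h, hh⟩ := (AddCommGrpCat.epi_iff_surjective (π.app (op Z))).1 inferInstance
    (φ.app (op Z) (𝟙 Z))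
  exact ⟨h, preadditiveYoneda_obj_hom_ext ((congrArg (π.app (op Z)) (Category.id_comp h)).trans hh)⟩

end Representables

lemma IsFP.exists_lift {B G : Cᵒᵖ ⥤ AddCommGrpCat.{v}} (hB : IsFP C B) (π : B ⟶ G) [Epi π]
    {Z : C} (φ : preadditiveYoneda.obj Z ⟶ G) : ∃ β : preadditiveYoneda.obj Z ⟶ B, β ≫ π = φ := by
  obtain ⟨X₁, X₀, f, p, w, ⟨hp⟩⟩ := hB
  have : Epi p := epi_of_isColimit_cofork hp
  obtain ⟨h, hh⟩ := exists_preadditiveYoneda_map_comp_eq (p ≫ π) φ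
  exact ⟨preadditiveYoneda.map h ≫ p, by rwa [Category.assoc]⟩

section Effaceable

variable {G G' : Cᵒᵖ ⥤ AddCommGrpCat.{v}}

lemma IsEff.of_iso (hG : IsEff C G) (e : G ≅ G') : IsEff C G' := by
  obtain ⟨X₁, X₀, f, hf, p, w, ⟨hp⟩⟩ := hG
  exact ⟨X₁, X₀, f, hf, p ≫ e.hom, by rw [reassoc_of% w, zero_comp],
    ⟨IsColimit.ofIsoColimit hp (Cofork.ext e (by simp))⟩⟩

lemma isEff_of_isZero (hG : IsZero G) : IsEff C G :=
  ⟨0, 0, 𝟙 0, inferInstance, 0, comp_zero,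
    ⟨CokernelCofork.IsColimit.ofEpiOfIsZero _
      (by rw [CategoryTheory.Functor.map_id]; infer_instance) hG⟩⟩

lemma IsEff.hom_eq_zero (hG : IsEff C G) {X : C} (u : G ⟶ preadditiveYoneda.obj X) : u = 0 := by
  obtain ⟨X₁, X₀, f, hf, p, w, ⟨hp⟩⟩ := hG
  obtain ⟨g, hg⟩ := preadditiveYoneda.map_surjective (p ≫ u)
  have : f ≫ g = 0 := preadditiveYoneda.map_injective (by simp [hg, reassoc_of% w])
  have hg0 : g = 0 := by rw [← cancel_epi f, this, comp_zero]
  exact Cofork.IsColimit.hom_ext hp (by simp [← hg, hg0])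

lemma isEff_of_forall_hom_eq_zero (hG : IsFP C G)
    (h : ∀ (X : C) (u : G ⟶ preadditiveYoneda.obj X), u = 0) : IsEff C G := by
  obtain ⟨X₁, X₀, f, p, w, ⟨hp⟩⟩ := hG
  refine ⟨X₁, X₀, f, Preadditive.epi_of_cancel_zero _ fun {X} g hg => ?_, p, w, ⟨hp⟩⟩
  obtain ⟨u, hu⟩ := CokernelCofork.IsColimit.desc' hp (preadditiveYoneda.map g)
    (by rw [← Functor.map_comp, hg, preadditiveYoneda_map_zero])
  refine preadditiveYoneda.map_injective ?_
  rw [preadditiveYoneda_map_zero, ← hu, h X u, comp_zero]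

end Effaceable

lemma exists_comp_eq_of_isEff_cokernel (hewc : EpiIsWeakCokernel (C := C))
    {I B : Cᵒᵖ ⥤ AddCommGrpCat.{v}} (hB : IsFP C B) (m : I ⟶ B) [Mono m]
    (hm : IsEff C (cokernel m)) {X : C} (u : I ⟶ preadditiveYoneda.obj X) :
    ∃ v : B ⟶ preadditiveYoneda.obj X, m ≫ v = u := by
  obtain ⟨Z₁, Z₀, e, he, p, w, ⟨hp⟩⟩ := hm
  obtain ⟨β, hβ⟩ := hB.exists_lift (cokernel.π m) p
  let α := Abelian.monoLift m (preadditiveYoneda.map e ≫ β) (by simp [hβ, w])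
  have sq : CommSq (preadditiveYoneda.map e) α β m := ⟨(Abelian.monoLift_comp _ _ _).symm⟩
  have : cokernel.map _ _ _ _ sq.w =
      (IsColimit.coconePointUniqueUpToIso (cokernelIsCokernel _) hp).hom :=
    coequalizer.hom_ext (by
      simpa [hβ] using (IsColimit.comp_coconePointUniqueUpToIso_hom (cokernelIsCokernel _) hp
        WalkingParallelPair.one).symm)
  have : IsIso (cokernel.map _ _ _ _ sq.w) := this ▸ inferInstance
  -- `α ≫ u = Y g` with `d ≫ g = 0`, so `g` factors through the weak cokernel `e` of `d`.
  obtain ⟨g, hg⟩ := preadditiveYoneda.map_surjective (α ≫ u)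
  obtain ⟨Z₂, d, hde, hdesc⟩ := hewc e he
  have hdα : preadditiveYoneda.map d ≫ α = 0 := by
    rw [← cancel_mono m, Category.assoc, ← sq.w, ← Functor.map_comp_assoc, hde,
      preadditiveYoneda_map_zero, zero_comp, zero_comp]
  obtain ⟨g', hg'⟩ := hdesc g (preadditiveYoneda.map_injective (by
    rw [Functor.map_comp, hg, ← Category.assoc, hdα, zero_comp, preadditiveYoneda_map_zero]))
  have hP := IsPushout.of_mono_of_isIso_cokernel_map sq
  exact ⟨hP.desc (preadditiveYoneda.map g') u (by rw [← Functor.map_comp, hg', hg]),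
    hP.inr_desc _ _ _⟩

section Precomposition

variable {A B : Cᵒᵖ ⥤ AddCommGrpCat.{v}} (ψ : A ⟶ B) (X : C)

lemma precomp_injective_of_isEff_cokernel (hψ : IsEff C (cokernel ψ)) :
    Function.Injective fun χ : B ⟶ preadditiveYoneda.obj X => ψ ≫ χ := by
  intro χ₁ χ₂ h
  have hχ : ψ ≫ (χ₁ - χ₂) = 0 := by rw [Preadditive.comp_sub]; exact sub_eq_zero.2 h
  rw [← sub_eq_zero, ← cokernel.π_desc ψ _ hχ, hψ.hom_eq_zero (cokernel.desc ψ _ hχ), comp_zero]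

lemma precomp_surjective_of_isEff_kernel_of_isEff_cokernel
    (hewc : EpiIsWeakCokernel (C := C)) (hB : IsFP C B)
    (hker : IsEff C (kernel ψ)) (hcoker : IsEff C (cokernel ψ)) :
    Function.Surjective fun χ : B ⟶ preadditiveYoneda.obj X => ψ ≫ χ := by
  intro χ
  have hcoimage : IsEff C (cokernel (Abelian.factorThruCoimage ψ)) :=
    hcoker.of_iso (cokernelIsoOfEq (Abelian.coimage.fac ψ).symm ≪≫ cokernelEpiComp _ _)
  obtain ⟨v, hv⟩ := exists_comp_eq_of_isEff_cokernel hewc hB (Abelian.factorThruCoimage ψ)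
    hcoimage (cokernel.desc (kernel.ι ψ) χ (hker.hom_eq_zero _))
  refine ⟨v, show ψ ≫ v = χ from ?_⟩
  rw [← Abelian.coimage.fac ψ, Category.assoc, hv]
  exact cokernel.π_desc _ _ _

end Precomposition

variable (C) in
abbrev homToRepresentable (X : C) : ModCat C ⥤ (Type (max u v))ᵒᵖ :=
  ObjectProperty.ι (IsFP C) ⋙ (yoneda.obj (preadditiveYoneda.obj X)).rightOp

lemma effW_isInvertedBy_homToRepresentable (hewc : EpiIsWeakCokernel (C := C)) (X : C) :
    (effW C).IsInvertedBy (homToRepresentable C X) := by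
  intro A B ψ ⟨hker, hcoker⟩
  refine (isIso_op_iff _).2 ((isIso_iff_bijective _).2 ⟨?_, ?_⟩)
  · exact precomp_injective_of_isEff_cokernel ψ.hom X hcoker
  · exact precomp_surjective_of_isEff_kernel_of_isEff_cokernel ψ.hom X hewc B.property hker hcoker

lemma comp_eq_of_effW_Q_map_eq (hewc : EpiIsWeakCokernel (C := C)) {A B : ModCat C}
    {ψ₁ ψ₂ : A ⟶ B} (h : (effW C).Q.map ψ₁ = (effW C).Q.map ψ₂) {X : C}
    (χ : B.obj ⟶ preadditiveYoneda.obj X) : ψ₁.hom ≫ χ = ψ₂.hom ≫ χ := by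
  have := AreEqualizedByLocalization.map_eq_of_isInvertedBy h _
      (effW_isInvertedBy_homToRepresentable hewc X)
  exact ConcreteCategory.congr_hom (congrArg Quiver.Hom.unop this) χ

lemma effW_of_isZero {A B : ModCat C} (ψ : A ⟶ B) (hA : IsEff C A.obj) (hB : IsZero B.obj) :
    effW C ψ := by
  have h0 : ψ.hom = 0 := hB.eq_of_tgt _ _
  exact ⟨hA.of_iso (kernelZeroIsoSource.symm ≪≫ kernelIsoOfEq h0.symm),
    isEff_of_isZero (hB.of_iso (cokernelIsoOfEq h0 ≪≫ cokernelZeroIsoTarget))⟩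

theorem isZero_of_no_hom_to_representables_general
    (hewc : EpiIsWeakCokernel (C := C))
    (F : ModCat C)
    (h : ∀ (X : C) (φ : (effW C).Q.obj F ⟶ (effW C).Q.obj ((yonedaMod C).obj X)),
      φ = (effW C).Q.map
        (show F ⟶ (yonedaMod C).obj X from
          ObjectProperty.homMk (0 : F.obj ⟶ preadditiveYoneda.obj X))) :
    IsZero ((effW C).Q.obj F) := by
  have hF : IsEff C F.obj := isEff_of_forall_hom_eq_zero F.property fun X u => by
    have := comp_eq_of_effW_Q_map_eq hewc (h X ((effW C).Q.map (ObjectProperty.homMk u))) (𝟙 _)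
    exact (Category.comp_id u).symm.trans (this.trans (Category.comp_id _))
  have hZ : IsZero ((yonedaMod C).obj 0).obj := preadditiveYoneda.map_isZero (isZero_zero C)
  have hZ' := IsZero.of_full_of_faithful_of_isZero (ObjectProperty.ι _) ((yonedaMod C).obj 0) hZ
  have := (effW C).Q_inverts _ (effW_of_isZero (hZ'.from_ F) hF hZ)
  exact ((effW C).isZero_Q_obj hZ').of_iso (asIso ((effW C).Q.map (hZ'.from_ F)))

/-- If an object `F` of `(mod C)/(eff C)` has only the zero morphism to every object
`Φ(X)` with `X ∈ C`, then `F` is zero in the quotient. -/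
theorem isZero_of_no_hom_to_representables
    (hwk : _root_.HasWeakKernels (C := C)) (hewc : EpiIsWeakCokernel (C := C))
    (F : ModCat C)
    (h : ∀ (X : C) (φ : (effW C).Q.obj F ⟶ (effW C).Q.obj ((yonedaMod C).obj X)),
      φ = (effW C).Q.map
        (show F ⟶ (yonedaMod C).obj X from
          ObjectProperty.homMk (0 : F.obj ⟶ preadditiveYoneda.obj X))) :
    IsZero ((effW C).Q.obj F) :=
  isZero_of_no_hom_to_representables_general hewc F h
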